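/- Let A = F⟨x_1, …, x_m⟩/I be a monomial algebra and let Λ = (λ_{i,j})_{i≥0, 1≤j≤m} be scalars in F such that for every i ≥ 0 some λ_{i,j} is nonzero; set C_i = { x_j : λ_{i,j} ≠ 0 }. Then the assignment e_i · x_j = λ_{i,j} e_{i+1} defines a well-defined point A-module structure on ⊕_{i≥0} F·e_i if and only if the sequence (C_i)_{i≥0} is a tree over A. In particular, every point A-module P = ⊕ F·e_i with e_i · x_j = λ_{i,j} e_{i+1} gives rise to a tree (C_i) over A, and conversely every tree over A together with such compatible nonvanishing scalar data yields a point A-module. -/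

import Mathlib

noncomputable section

open scoped BigOperators

/-- The free associative `F`-algebra on `m` generators, realized as the monoid
algebra of the free monoid on `Fin m`. -/
abbrev FreeAlg (F : Type) [Field F] (m : ℕ) : Type :=
  MonoidAlgebra F (FreeMonoid (Fin m))

variable (F : Type) [Field F] {m : ℕ}

/-- The element of the free algebra corresponding to a word `u`. -/
def wordElem (u : List (Fin m)) : FreeAlg F m :=
  MonoidAlgebra.of F (FreeMonoid (Fin m)) (FreeMonoid.ofList u)

/-- The relation identifying the forbidden words in `W` with `0`. -/
def monRel (W : Set (List (Fin m))) : FreeAlg F m → FreeAlg F m → Prop :=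
  fun a b => (∃ u ∈ W, a = wordElem F u) ∧ b = 0

/-- The monomial algebra `F⟨x_1,…,x_m⟩/⟨W⟩` determined by the set `W` of forbidden
words. -/
abbrev MonAlg (W : Set (List (Fin m))) : Type :=
  RingQuot (monRel F W)

/-- The canonical projection from the free algebra onto the monomial algebra. -/
def monAlgPi (W : Set (List (Fin m))) : FreeAlg F m →ₐ[F] MonAlg F W :=
  RingQuot.mkAlgHom F (monRel F W)

/-- The image of the word `u` in the monomial algebra; `u` is a *nonzero monomial*
of the monomial algebra iff `mono F W u ≠ 0`. -/
def mono (W : Set (List (Fin m))) (u : List (Fin m)) : MonAlg F W :=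
  monAlgPi F W (wordElem F u)

/-- The degree-`d` homogeneous component of the monomial algebra, spanned by the
images of the words of length `d`. -/
def homog (W : Set (List (Fin m))) (d : ℕ) : Submodule F (MonAlg F W) :=
  Submodule.span F { a | ∃ u : List (Fin m), u.length = d ∧ a = mono F W u }
/-- The right action of a single word on the graded vector space `⊕_{i≥0} F·e_i`,
where the letter `x_j` acts by `e_i · x_j = lam i j • e_{i+1}`. -/
def ptAct (lam : ℕ → Fin m → F) : List (Fin m) → ((ℕ →₀ F) →ₗ[F] (ℕ →₀ F))
  | [] => LinearMap.id
  | j :: u => (ptAct lam u).comp (Finsupp.lsum F fun i => lam i j • Finsupp.lsingle (i + 1))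

/-- The linear extension of the right action to the whole free algebra. -/
def algAct (lam : ℕ → Fin m → F) (a : FreeAlg F m) : (ℕ →₀ F) →ₗ[F] (ℕ →₀ F) :=
  Finsupp.sum a.coeff fun u c => c • ptAct F lam (FreeMonoid.toList u)

/-- The basis vector `e_i` of the point module. -/
def eVec (i : ℕ) : ℕ →₀ F := Finsupp.single i 1

/-- The scalar data `lam` defines a (right) point module over the monomial algebra
with forbidden words `W`: the action of the free algebra descends to the quotient,
and the module is generated by `e_0`.  (The homogeneous components `F·e_i` are
one-dimensional by construction.) -/
structure IsPointModule (W : Set (List (Fin m))) (lam : ℕ → Fin m → F) : Prop where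
  welldef : ∀ a : FreeAlg F m, monAlgPi F W a = 0 → algAct F lam a = 0
  cyclic : ∀ v : ℕ →₀ F, ∃ a : FreeAlg F m, algAct F lam a (eVec F 0) = v

/-- The point module given by `lam` is faithful: the only element of the monomial
algebra annihilating it is `0`. -/
def IsFaithfulPM (W : Set (List (Fin m))) (lam : ℕ → Fin m → F) : Prop :=
  ∀ a : FreeAlg F m, algAct F lam a = 0 → monAlgPi F W a = 0

/-- The annihilator in the monomial algebra of the point module given by `lam`. -/
def annSet (W : Set (List (Fin m))) (lam : ℕ → Fin m → F) : Set (MonAlg F W) :=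
  { x | ∀ a : FreeAlg F m, monAlgPi F W a = x → algAct F lam a = 0 }
/-- The word `u`, read starting at position `i`, selects its letters from the
sequence of sets `C`. -/
def SelectsFrom (C : ℕ → Set (Fin m)) (i : ℕ) (u : List (Fin m)) : Prop :=
  ∀ (k : ℕ) (h : k < u.length), u.get ⟨k, h⟩ ∈ C (i + k)

/-- A tree over the monomial algebra with forbidden words `W`: a sequence of
nonempty subsets of the alphabet all of whose "segment words" are nonzero
monomials of the algebra. -/
def IsTree (W : Set (List (Fin m))) (C : ℕ → Set (Fin m)) : Prop :=
  (∀ i, (C i).Nonempty) ∧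
    ∀ (i : ℕ) (u : List (Fin m)), SelectsFrom C i u → mono F W u ≠ 0

/-!
A word `u` sends `e_i` to `(∏_k λ_{i+k, u_k}) e_{i+|u|}`, and this scalar is nonzero exactly
when `u` selects its letters from the sets `C_i, C_{i+1}, …`. If the action descends to `A`,
a segment word of `(C_i)` that vanished in `A` would act as zero on `e_i`, which it does not;
so `(C_i)` is a tree. Conversely, over a tree every forbidden word kills every `e_i`, so the
action of the free algebra factors through `A`; and since every `C_i` is nonempty, some word
of length `n` carries `e_0` to a nonzero multiple of `e_n`, so `e_0` generates the module.
-/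

section PointModule

variable {F}

/-- The scalar by which the word `u` carries `e_i` to `e_{i + |u|}`. -/
def prodLam (lam : ℕ → Fin m → F) : ℕ → List (Fin m) → F
  | _, [] => 1
  | i, j :: u => lam i j * prodLam lam (i + 1) u

def nonzeroLetters (lam : ℕ → Fin m → F) (i : ℕ) : Set (Fin m) :=
  { j | lam i j ≠ 0 }

section WordAction

variable (lam : ℕ → Fin m → F)

lemma ptAct_cons (j : Fin m) (u : List (Fin m)) :
    ptAct F lam (j :: u) = (ptAct F lam u).comp (ptAct F lam [j]) :=
  rfl

lemma ptAct_append (u v : List (Fin m)) :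
    ptAct F lam (u ++ v) = (ptAct F lam v).comp (ptAct F lam u) := by
  induction u with
  | nil => rfl
  | cons j u ih => rw [List.cons_append, ptAct_cons, ih, LinearMap.comp_assoc]; rfl

lemma ptAct_single (u : List (Fin m)) (i : ℕ) (c : F) :
    ptAct F lam u (Finsupp.single i c) = (c * prodLam lam i u) • eVec F (i + u.length) := by
  induction u generalizing i c with
  | nil => simp [ptAct, prodLam, eVec]
  | cons j u ih =>
    have hletter :
        ptAct F lam [j] (Finsupp.single i c) = Finsupp.single (i + 1) (lam i j * c) := by
      simp [ptAct, mul_comm]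
    rw [ptAct_cons, LinearMap.comp_apply, hletter, ih, prodLam, List.length_cons,
      show i + (u.length + 1) = i + 1 + u.length by omega]
    ring_nf

lemma ptAct_eVec (u : List (Fin m)) (i : ℕ) :
    ptAct F lam u (eVec F i) = prodLam lam i u • eVec F (i + u.length) := by
  rw [eVec, ptAct_single, one_mul]

lemma ptAct_eVec_ne_zero {u : List (Fin m)} {i : ℕ} (hu : prodLam lam i u ≠ 0) :
    ptAct F lam u (eVec F i) ≠ 0 := by
  rw [ptAct_eVec]
  exact smul_ne_zero hu (Finsupp.single_ne_zero.mpr one_ne_zero)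

lemma exists_length_eq_prodLam_ne_zero (hgen : ∀ i : ℕ, ∃ j : Fin m, lam i j ≠ 0)
    (n i : ℕ) :
    ∃ u : List (Fin m), u.length = n ∧ prodLam lam i u ≠ 0 := by
  induction n generalizing i with
  | zero => exact ⟨[], rfl, one_ne_zero⟩
  | succ n ih =>
    obtain ⟨j, hj⟩ := hgen i
    obtain ⟨u, hlen, hu⟩ := ih (i + 1)
    exact ⟨j :: u, by rw [List.length_cons, hlen], mul_ne_zero hj hu⟩

end WordAction

lemma selectsFrom_cons (C : ℕ → Set (Fin m)) (i : ℕ) (j : Fin m) (u : List (Fin m)) :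
    SelectsFrom C i (j :: u) ↔ j ∈ C i ∧ SelectsFrom C (i + 1) u := by
  constructor
  · intro h
    refine ⟨by simpa using h 0 (by simp), fun k hk => ?_⟩
    simpa [show i + (k + 1) = i + 1 + k by omega] using h (k + 1) (by simpa using hk)
  · rintro ⟨hj, hu⟩ (_ | k) hk
    · simpa using hj
    · simpa [show i + (k + 1) = i + 1 + k by omega] using hu k (by simpa using hk)

lemma prodLam_ne_zero_iff_selectsFrom (lam : ℕ → Fin m → F) (u : List (Fin m)) (i : ℕ) :
    prodLam lam i u ≠ 0 ↔ SelectsFrom (nonzeroLetters lam) i u := by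
  induction u generalizing i with
  | nil => exact iff_of_true one_ne_zero (fun k hk => absurd hk (Nat.not_lt_zero k))
  | cons j u ih => rw [selectsFrom_cons, prodLam, mul_ne_zero_iff, ih]; rfl

section AlgebraAction

variable (lam : ℕ → Fin m → F)

/-- Words act through the opposite of the endomorphism monoid, since the action is on the
right. -/
def wordActHom : FreeMonoid (Fin m) →* (Module.End F (ℕ →₀ F))ᵐᵒᵖ where
  toFun u := MulOpposite.op (ptAct F lam u.toList)
  map_one' := rfl
  map_mul' u v := by
    rw [FreeMonoid.toList_mul, ptAct_append]
    rfl

def actHom : FreeAlg F m →ₐ[F] (Module.End F (ℕ →₀ F))ᵐᵒᵖ :=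
  MonoidAlgebra.lift F _ _ (wordActHom lam)

lemma algAct_eq_unop_actHom (a : FreeAlg F m) : algAct F lam a = (actHom lam a).unop := by
  rw [actHom, MonoidAlgebra.lift_apply, MulOpposite.unop_finsuppSum]
  rfl

lemma actHom_wordElem (u : List (Fin m)) :
    actHom lam (wordElem F u) = MulOpposite.op (ptAct F lam u) := by
  rw [actHom, wordElem, MonoidAlgebra.lift_of]
  rfl

lemma algAct_wordElem (u : List (Fin m)) : algAct F lam (wordElem F u) = ptAct F lam u := by
  rw [algAct_eq_unop_actHom, actHom_wordElem, MulOpposite.unop_op]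

lemma algAct_add (a b : FreeAlg F m) :
    algAct F lam (a + b) = algAct F lam a + algAct F lam b := by
  simp only [algAct_eq_unop_actHom, map_add, MulOpposite.unop_add]

lemma algAct_smul (c : F) (a : FreeAlg F m) : algAct F lam (c • a) = c • algAct F lam a := by
  simp only [algAct_eq_unop_actHom, map_smul, MulOpposite.unop_smul]

end AlgebraAction

lemma mono_eq_zero_of_mem {W : Set (List (Fin m))} {u : List (Fin m)} (hu : u ∈ W) :
    mono F W u = 0 := by
  rw [mono, monAlgPi, RingQuot.mkAlgHom_rel F ⟨⟨u, hu, rfl⟩, rfl⟩, map_zero]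

lemma mono_ne_zero_of_isPointModule {W : Set (List (Fin m))} {lam : ℕ → Fin m → F}
    (hPM : IsPointModule F W lam) {i : ℕ} {u : List (Fin m)}
    (hu : SelectsFrom (nonzeroLetters lam) i u) : mono F W u ≠ 0 := by
  intro hzero
  have hact : ptAct F lam u = 0 := by rw [← algAct_wordElem]; exact hPM.welldef _ hzero
  exact ptAct_eVec_ne_zero lam ((prodLam_ne_zero_iff_selectsFrom lam u i).mpr hu)
    (by rw [hact, LinearMap.zero_apply])

section TreeToPointModule

variable {W : Set (List (Fin m))} {lam : ℕ → Fin m → F}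

lemma ptAct_eq_zero_of_mem
    (hT : ∀ (i : ℕ) (u : List (Fin m)),
      SelectsFrom (nonzeroLetters lam) i u → mono F W u ≠ 0)
    {u : List (Fin m)} (hu : u ∈ W) : ptAct F lam u = 0 := by
  refine Finsupp.lhom_ext fun i c => ?_
  have hp : prodLam lam i u = 0 := by
    by_contra hne
    exact hT i u ((prodLam_ne_zero_iff_selectsFrom lam u i).mp hne) (mono_eq_zero_of_mem hu)
  rw [ptAct_single, hp, mul_zero, zero_smul, LinearMap.zero_apply]

lemma algAct_eq_zero_of_monAlgPi_eq_zero
    (hT : ∀ (i : ℕ) (u : List (Fin m)),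
      SelectsFrom (nonzeroLetters lam) i u → mono F W u ≠ 0)
    {a : FreeAlg F m} (ha : monAlgPi F W a = 0) : algAct F lam a = 0 := by
  have hrel : ∀ ⦃x y : FreeAlg F m⦄, monRel F W x y → actHom lam x = actHom lam y := by
    rintro _ _ ⟨⟨u, hu, rfl⟩, rfl⟩
    rw [actHom_wordElem, ptAct_eq_zero_of_mem hT hu, map_zero, MulOpposite.op_zero]
  have hfactor : actHom lam a = RingQuot.liftAlgHom F ⟨actHom lam, hrel⟩ (monAlgPi F W a) :=
    (RingQuot.liftAlgHom_mkAlgHom_apply F (actHom lam) hrel a).symm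
  rw [algAct_eq_unop_actHom, hfactor, ha, map_zero, MulOpposite.unop_zero]

end TreeToPointModule

lemma exists_algAct_eVec_zero_eq {lam : ℕ → Fin m → F}
    (hgen : ∀ i : ℕ, ∃ j : Fin m, lam i j ≠ 0) (v : ℕ →₀ F) :
    ∃ a : FreeAlg F m, algAct F lam a (eVec F 0) = v := by
  induction v using Finsupp.induction_linear with
  | zero =>
    refine ⟨0, ?_⟩
    rw [algAct_eq_unop_actHom, map_zero, MulOpposite.unop_zero, LinearMap.zero_apply]
  | add v w hv hw =>
    obtain ⟨a, rfl⟩ := hv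
    obtain ⟨b, rfl⟩ := hw
    exact ⟨a + b, by rw [algAct_add, LinearMap.add_apply]⟩
  | single n c =>
    obtain ⟨u, hlen, hu⟩ := exists_length_eq_prodLam_ne_zero lam hgen n 0
    refine ⟨(c / prodLam lam 0 u) • wordElem F u, ?_⟩
    rw [algAct_smul, algAct_wordElem, LinearMap.smul_apply, ptAct_eVec, smul_smul,
      div_mul_cancel₀ c hu, zero_add, hlen, eVec, Finsupp.smul_single, smul_eq_mul, mul_one]

end PointModule

/-- For a monomial algebra `A = F⟨x_1,…,x_m⟩/I` and scalar data
`Λ = (λ_{i,j})` with, for every `i`, some `λ_{i,j} ≠ 0` (so each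
`C_i = {x_j : λ_{i,j} ≠ 0}` is nonempty), the assignment `e_i · x_j = λ_{i,j} e_{i+1}`
defines a well-defined point `A`-module structure on `⊕_{i≥0} F·e_i` if and only if
the sequence `(C_i)` is a tree over `A`. -/
theorem statement1 (F : Type) [Field F] (m : ℕ) (W : Set (List (Fin m)))
    (lam : ℕ → Fin m → F) (hgen : ∀ i : ℕ, ∃ j : Fin m, lam i j ≠ 0) :
    IsPointModule F W lam ↔ IsTree F W (fun i => { j : Fin m | lam i j ≠ 0 }) := by
  constructor
  · intro hPM
    exact ⟨hgen, fun _ _ hu => mono_ne_zero_of_isPointModule hPM hu⟩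
  · intro hT
    exact ⟨fun _ ha => algAct_eq_zero_of_monAlgPi_eq_zero hT.2 ha,
      exists_algAct_eVec_zero_eq hgen⟩
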